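/- Assume the positivity condition: l_j − L_j(τ) > 0 for every τ ∈ ℝ^ℓ and every j. Then the map J := (J₁, …, J_ℓ) : ℝ^ℓ → ℝ^ℓ is injective, its image is exactly the set { x ∈ ℝ^ℓ : 0 < x_j < l_j − Σ_{i<j} c_{ji} x_i for all j }, and the closure of its image is the moment polytope Δ := { x ∈ ℝ^ℓ : 0 ≤ x_j ≤ l_j − Σ_{i<j} c_{ji} x_i for all j }. -/

import Mathlib

open Real Finset

noncomputable section

/-- `K(t) = log(1 + e^{2t})`. -/
def Kfun (t : ℝ) : ℝ := Real.log (1 + Real.exp (2 * t))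

/-- `𝒥(t) = e^{2t}/(1 + e^{2t})`. -/
def Jfun (t : ℝ) : ℝ := Real.exp (2 * t) / (1 + Real.exp (2 * t))

/-- The coordinate change `Φ(σ)_i = σ_i + (1/2)·Σ_{j>i} c_{ji} K(σ_j)`. -/
def Phi {ℓ : ℕ} (c : Fin ℓ → Fin ℓ → ℤ) (σ : Fin ℓ → ℝ) : Fin ℓ → ℝ :=
  fun i => σ i + (1 / 2) * ∑ j ∈ Finset.univ.filter (fun j => i < j), (c j i : ℝ) * Kfun (σ j)

/-- The inverse of the coordinate change `Φ`. -/
def PhiInv {ℓ : ℕ} (c : Fin ℓ → Fin ℓ → ℤ) : (Fin ℓ → ℝ) → (Fin ℓ → ℝ) :=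
  Function.invFun (Phi c)

/-- The Kähler potential `K_λ(τ) = Σ_i l_i K(τ̃_i)`, where `τ̃ = Φ⁻¹(τ)`. -/
def Klam {ℓ : ℕ} (l : Fin ℓ → ℤ) (c : Fin ℓ → Fin ℓ → ℤ) (τ : Fin ℓ → ℝ) : ℝ :=
  ∑ i, (l i : ℝ) * Kfun (PhiInv c τ i)

/-- The action variables `J_j(τ) = (1/2)·∂K_λ/∂τ_j`. -/
def Jact {ℓ : ℕ} (l : Fin ℓ → ℤ) (c : Fin ℓ → Fin ℓ → ℤ) (j : Fin ℓ) (τ : Fin ℓ → ℝ) : ℝ :=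
  (1 / 2) * fderiv ℝ (Klam l c) τ (Pi.single j 1)

/-- `L_j(τ) = Σ_{i<j} c_{ji} J_i(τ)`. -/
def Lfun {ℓ : ℕ} (l : Fin ℓ → ℤ) (c : Fin ℓ → Fin ℓ → ℤ) (j : Fin ℓ) (τ : Fin ℓ → ℝ) : ℝ :=
  ∑ i ∈ Finset.univ.filter (fun i => i < j), (c j i : ℝ) * Jact l c i τ


/-!
In the coordinates `σ = Φ⁻¹(τ)` the potential is `K_λ(Φ σ) = Σ_i l_i K(σ_i)`. Differentiating this
identity by the chain rule, the triangular Jacobian of `Φ` gives `J_j + 𝒥(σ_j) L_j = l_j 𝒥(σ_j)`,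
i.e. `J_j = (l_j − L_j) 𝒥(σ_j)`. As `𝒥` is a bijection of `ℝ` onto `(0, 1)`, positivity of
`l_j − L_j` places `J` in the open polytope, and `J_j` determines `σ_j` once the `J_i` with `i < j`
are known; this gives injectivity and, by induction on `j`, surjectivity onto the open polytope.
Finally, a nonempty set cut out by strict affine inequalities has as closure the set cut out by
the non-strict ones.
-/

theorem Jfun_eq_sigmoid (t : ℝ) : Jfun t = sigmoid (2 * t) := by
  rw [Jfun, sigmoid_def, Real.exp_neg]
  field_simp
  ring

theorem Jfun_pos (t : ℝ) : 0 < Jfun t := Jfun_eq_sigmoid t ▸ sigmoid_pos _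

theorem Jfun_lt_one (t : ℝ) : Jfun t < 1 := Jfun_eq_sigmoid t ▸ sigmoid_lt_one _

theorem Jfun_injective : Function.Injective Jfun := fun a b h ↦ by
  simpa [Jfun_eq_sigmoid] using h

theorem exists_Jfun_eq {y : ℝ} (h0 : 0 < y) (h1 : y < 1) : ∃ t, Jfun t = y := by
  obtain ⟨s, hs⟩ : y ∈ Set.range sigmoid := range_sigmoid ▸ ⟨h0, h1⟩
  exact ⟨s / 2, by rw [Jfun_eq_sigmoid, mul_div_cancel₀ s two_ne_zero, hs]⟩

theorem hasDerivAt_Kfun (t : ℝ) : HasDerivAt Kfun (2 * Jfun t) t := by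
  have h : HasDerivAt (fun t ↦ 1 + Real.exp (2 * t)) (Real.exp (2 * t) * 2) t :=
    ((hasDerivAt_id t).const_mul 2).exp.const_add 1 |>.congr_deriv (by simp)
  convert h.log (by positivity) using 1
  · rfl
  · rw [Jfun]
    ring

theorem differentiable_Kfun : Differentiable ℝ Kfun := fun t ↦ (hasDerivAt_Kfun t).differentiableAt

theorem hasFDerivAt_Kfun_apply {ι : Type*} [Fintype ι] (σ : ι → ℝ) (j : ι) :
    HasFDerivAt (fun σ : ι → ℝ ↦ Kfun (σ j))
      ((2 * Jfun (σ j)) • (ContinuousLinearMap.proj j : (ι → ℝ) →L[ℝ] ℝ)) σ :=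
  (hasDerivAt_Kfun (σ j)).comp_hasFDerivAt (h₂ := Kfun) σ (hasFDerivAt_apply j σ)

theorem closure_setOf_forall_pos_of_affine {E ι : Type*} [AddCommGroup E] [Module ℝ E]
    [TopologicalSpace E] [ContinuousAdd E] [ContinuousSMul ℝ E] (f : ι → E →ᵃ[ℝ] ℝ)
    (hf : ∀ i, Continuous (f i)) (hne : ∃ p, ∀ i, 0 < f i p) :
    closure {x | ∀ i, 0 < f i x} = {x | ∀ i, 0 ≤ f i x} := by
  refine (closure_minimal (fun x hx i ↦ (hx i).le) ?_).antisymm fun x hx ↦ ?_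
  · simp only [Set.ofPred_forall]
    exact isClosed_iInter fun i ↦ isClosed_le continuous_const (hf i)
  obtain ⟨p, hp⟩ := hne
  have hseg : openSegment ℝ x p ⊆ {x | ∀ i, 0 < f i x} := by
    rintro _ ⟨a, b, ha, hb, hab, rfl⟩ i
    rw [Convex.combo_affine_apply hab, smul_eq_mul, smul_eq_mul]
    exact add_pos_of_nonneg_of_pos (mul_nonneg ha.le (hx i)) (mul_pos hb (hp i))
  exact closure_mono hseg (segment_subset_closure_openSegment (left_mem_segment ℝ x p))

section MomentPolytope

variable {ℓ : ℕ} (l : Fin ℓ → ℤ) (c : Fin ℓ → Fin ℓ → ℤ)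

def openMomentPolytope : Set (Fin ℓ → ℝ) :=
  {x | ∀ j, 0 < x j ∧ x j < (l j : ℝ) - ∑ i ∈ univ.filter (fun i => i < j), (c j i : ℝ) * x i}

def momentPolytope : Set (Fin ℓ → ℝ) :=
  {x | ∀ j, 0 ≤ x j ∧ x j ≤ (l j : ℝ) - ∑ i ∈ univ.filter (fun i => i < j), (c j i : ℝ) * x i}

def facetForm : Fin ℓ ⊕ Fin ℓ → (Fin ℓ → ℝ) →ᵃ[ℝ] ℝ
  | .inl j => (LinearMap.proj j : (Fin ℓ → ℝ) →ₗ[ℝ] ℝ).toAffineMap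
  | .inr j => AffineMap.const ℝ _ (l j : ℝ) - ((LinearMap.proj j : (Fin ℓ → ℝ) →ₗ[ℝ] ℝ) +
      ∑ i ∈ univ.filter (fun i => i < j), (c j i : ℝ) • LinearMap.proj i).toAffineMap

theorem facetForm_inl (j : Fin ℓ) (x : Fin ℓ → ℝ) : facetForm l c (.inl j) x = x j := rfl

theorem facetForm_inr (j : Fin ℓ) (x : Fin ℓ → ℝ) : facetForm l c (.inr j) x =
    (l j : ℝ) - ∑ i ∈ univ.filter (fun i => i < j), (c j i : ℝ) * x i - x j := by
  simp only [facetForm, AffineMap.coe_sub, AffineMap.coe_const, LinearMap.coe_toAffineMap,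
    Pi.sub_apply, Function.const_apply, LinearMap.add_apply, LinearMap.coe_proj, Function.eval,
    LinearMap.coe_sum, LinearMap.coe_smul, Finset.sum_apply, Pi.smul_apply, smul_eq_mul]
  ring

theorem openMomentPolytope_eq : openMomentPolytope l c = {x | ∀ k, 0 < facetForm l c k x} := by
  ext x
  simp only [openMomentPolytope, Set.mem_ofPred_eq, Sum.forall, facetForm_inl, facetForm_inr,
    sub_pos, forall_and]

theorem momentPolytope_eq : momentPolytope l c = {x | ∀ k, 0 ≤ facetForm l c k x} := by
  ext x
  simp only [momentPolytope, Set.mem_ofPred_eq, Sum.forall, facetForm_inl, facetForm_inr,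
    sub_nonneg, forall_and]

theorem closure_openMomentPolytope (h : (openMomentPolytope l c).Nonempty) :
    closure (openMomentPolytope l c) = momentPolytope l c := by
  rw [openMomentPolytope_eq] at h ⊢
  rw [momentPolytope_eq]
  exact closure_setOf_forall_pos_of_affine _
    (fun k ↦ (facetForm l c k).continuous_of_finiteDimensional) h

end MomentPolytope

namespace Phi

variable {ℓ : ℕ} (c : Fin ℓ → Fin ℓ → ℤ)

def backSubst (τ : Fin ℓ → ℝ) (i : Fin ℓ) : ℝ :=
  τ i - (1 / 2) * ∑ j ∈ (univ.filter fun j => i < j).attach, (c j.1 i : ℝ) * Kfun (backSubst τ j.1)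
termination_by ℓ - i.val
decreasing_by have := (mem_filter.mp j.2).2; omega

theorem backSubst_eq (τ : Fin ℓ → ℝ) (i : Fin ℓ) :
    backSubst c τ i = τ i - (1 / 2) * ∑ j ∈ univ.filter (fun j => i < j),
      (c j i : ℝ) * Kfun (backSubst c τ j) := by
  rw [backSubst,
    sum_attach (univ.filter fun j => i < j) fun j ↦ (c j i : ℝ) * Kfun (backSubst c τ j)]

theorem apply_backSubst (τ : Fin ℓ → ℝ) : Phi c (backSubst c τ) = τ := by
  ext i
  rw [Phi, backSubst_eq]
  ring

theorem backSubst_apply (σ : Fin ℓ → ℝ) : backSubst c (Phi c σ) = σ := by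
  ext i
  induction i using WellFoundedGT.induction with
  | _ i ih =>
    have hsum : ∑ j ∈ univ.filter (fun j => i < j), (c j i : ℝ) * Kfun (backSubst c (Phi c σ) j)
        = ∑ j ∈ univ.filter (fun j => i < j), (c j i : ℝ) * Kfun (σ j) :=
      sum_congr rfl fun j hj ↦ by rw [ih j (mem_filter.mp hj).2]
    rw [backSubst_eq, hsum, Phi]
    ring

theorem differentiable_backSubst : Differentiable ℝ (backSubst c) := by
  refine differentiable_pi.2 fun i ↦ ?_
  induction i using WellFoundedGT.induction with
  | _ i ih =>
    simp_rw [backSubst_eq c _ i]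
    refine (differentiable_apply i).sub (.const_mul (.fun_sum fun j hj ↦ .const_mul ?_ _) _)
    exact differentiable_Kfun.comp (ih j (mem_filter.mp hj).2)

def jacobian (σ : Fin ℓ → ℝ) : (Fin ℓ → ℝ) →L[ℝ] Fin ℓ → ℝ :=
  .pi fun i ↦ .proj i + ∑ j ∈ univ.filter (fun j => i < j), ((c j i : ℝ) * Jfun (σ j)) • .proj j

theorem hasFDerivAt (σ : Fin ℓ → ℝ) : HasFDerivAt (Phi c) (jacobian c σ) σ := by
  refine hasFDerivAt_pi.2 fun i ↦ (hasFDerivAt_apply i σ).add <|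
    ((HasFDerivAt.fun_sum fun j _ ↦ (hasFDerivAt_Kfun_apply σ j).const_mul (c j i : ℝ)).const_mul
      (1 / 2 : ℝ)).congr_fderiv ?_
  rw [smul_sum]
  refine sum_congr rfl fun j _ ↦ ?_
  rw [smul_smul, smul_smul]
  congr 1
  ring

theorem jacobian_single (σ : Fin ℓ → ℝ) (j : Fin ℓ) :
    jacobian c σ (Pi.single j 1) = Pi.single j 1 +
      ∑ i ∈ univ.filter (fun i => i < j), ((c j i : ℝ) * Jfun (σ j)) • Pi.single i 1 := by
  ext i
  simp [jacobian, Pi.single_apply]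

end Phi

section Potential

variable {ℓ : ℕ} (l : Fin ℓ → ℤ) (c : Fin ℓ → Fin ℓ → ℤ)

theorem PhiInv_eq_backSubst : PhiInv c = Phi.backSubst c := by
  funext τ
  calc PhiInv c τ = Phi.backSubst c (Phi c (PhiInv c τ)) := (Phi.backSubst_apply c _).symm
    _ = Phi.backSubst c τ := by rw [PhiInv, Function.invFun_eq ⟨_, Phi.apply_backSubst c τ⟩]

theorem Klam_Phi (σ : Fin ℓ → ℝ) : Klam l c (Phi c σ) = ∑ i, (l i : ℝ) * Kfun (σ i) := by
  simp only [Klam, PhiInv_eq_backSubst, Phi.backSubst_apply]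

theorem differentiable_Klam : Differentiable ℝ (Klam l c) := by
  rw [show Klam l c = fun τ ↦ ∑ i, (l i : ℝ) * Kfun (Phi.backSubst c τ i) by
    ext; simp only [Klam, PhiInv_eq_backSubst]]
  exact .fun_sum fun i _ ↦
    (differentiable_Kfun.comp (differentiable_pi.1 (Phi.differentiable_backSubst c) i)).const_mul _

theorem Jact_Phi (σ : Fin ℓ → ℝ) (j : Fin ℓ) :
    Jact l c j (Phi c σ) = ((l j : ℝ) - Lfun l c j (Phi c σ)) * Jfun (σ j) := by
  set D := fderiv ℝ (Klam l c) (Phi c σ)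
  have hF : HasFDerivAt (fun σ : Fin ℓ → ℝ ↦ ∑ i, (l i : ℝ) * Kfun (σ i))
      (∑ i, ((l i : ℝ) * (2 * Jfun (σ i))) •
        (ContinuousLinearMap.proj i : (Fin ℓ → ℝ) →L[ℝ] ℝ)) σ :=
    .fun_sum fun i _ ↦ (hasFDerivAt_Kfun_apply σ i).const_mul _ |>.congr_fderiv (smul_smul _ _ _)
  have hchain : D.comp (Phi.jacobian c σ) = _ :=
    ((differentiable_Klam l c _).hasFDerivAt.comp σ (Phi.hasFDerivAt c σ)).unique
      (hF.congr_of_eventuallyEq (.of_forall fun σ ↦ Klam_Phi l c σ))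
  have hD (i : Fin ℓ) : D (Pi.single i 1) = 2 * Jact l c i (Phi c σ) := by rw [Jact]; ring
  have hsum : ∑ i ∈ univ.filter (fun i => i < j),
      (c j i : ℝ) * Jfun (σ j) * (2 * Jact l c i (Phi c σ)) =
      2 * Jfun (σ j) * Lfun l c j (Phi c σ) := by
    rw [Lfun, mul_sum]
    exact sum_congr rfl fun i _ ↦ by ring
  have hj := congr($hchain (Pi.single j 1))
  simp only [ContinuousLinearMap.comp_apply, Phi.jacobian_single, map_add, map_sum, map_smul, hD,
    smul_eq_mul, hsum, FunLike.coe_sum, Finset.sum_apply, FunLike.coe_smul, Pi.smul_apply,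
    ContinuousLinearMap.proj_apply, Pi.single_apply, mul_ite, mul_one, mul_zero,
    sum_ite_eq', mem_univ, if_true] at hj
  linear_combination hj / 2

theorem Jact_eq (τ : Fin ℓ → ℝ) (j : Fin ℓ) :
    Jact l c j τ = ((l j : ℝ) - Lfun l c j τ) * Jfun (Phi.backSubst c τ j) := by
  conv_lhs => rw [← Phi.apply_backSubst c τ]
  rw [Jact_Phi, Phi.apply_backSubst]

end Potential

section ActionMap

variable {ℓ : ℕ} (l : Fin ℓ → ℤ) (c : Fin ℓ → Fin ℓ → ℤ)

def actionMap (τ : Fin ℓ → ℝ) : Fin ℓ → ℝ := fun j ↦ Jact l c j τ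

theorem range_actionMap_subset (hpos : ∀ τ j, 0 < (l j : ℝ) - Lfun l c j τ) :
    Set.range (actionMap l c) ⊆ openMomentPolytope l c := by
  rintro _ ⟨τ, rfl⟩ j
  rw [actionMap, Jact_eq]
  exact ⟨mul_pos (hpos τ j) (Jfun_pos _), mul_lt_of_lt_one_right (hpos τ j) (Jfun_lt_one _)⟩

theorem openMomentPolytope_subset_range : openMomentPolytope l c ⊆ Set.range (actionMap l c) := by
  intro x hx
  have hd (j : Fin ℓ) := (hx j).1.trans (hx j).2
  choose σ hσ using fun j ↦
    exists_Jfun_eq (div_pos (hx j).1 (hd j)) ((div_lt_one (hd j)).2 (hx j).2)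
  refine ⟨Phi c σ, funext fun j ↦ ?_⟩
  induction j using WellFoundedLT.induction with
  | _ j ih =>
    have hL : Lfun l c j (Phi c σ) = ∑ i ∈ univ.filter (fun i => i < j), (c j i : ℝ) * x i :=
      sum_congr rfl fun i hi ↦ by rw [← ih i (mem_filter.mp hi).2]; rfl
    rw [actionMap, Jact_Phi, hL, hσ, mul_div_cancel₀ _ (hd j).ne']

theorem actionMap_injective (hpos : ∀ τ j, 0 < (l j : ℝ) - Lfun l c j τ) :
    Function.Injective (actionMap l c) := by
  intro τ τ' h
  have hL (j : Fin ℓ) : Lfun l c j τ = Lfun l c j τ' :=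
    sum_congr rfl fun i _ ↦ congrArg _ (congrFun h i)
  have hσ : Phi.backSubst c τ = Phi.backSubst c τ' := funext fun j ↦ Jfun_injective <|
    mul_left_cancel₀ (hpos τ j).ne' <| by rw [← Jact_eq, hL j, ← Jact_eq]; exact congrFun h j
  rw [← Phi.apply_backSubst c τ, hσ, Phi.apply_backSubst]

end ActionMap

theorem action_map_range_is_polytope_general {ℓ : ℕ} (l : Fin ℓ → ℤ)
    (c : Fin ℓ → Fin ℓ → ℤ)
    (hpos : ∀ τ : Fin ℓ → ℝ, ∀ j : Fin ℓ, 0 < (l j : ℝ) - Lfun l c j τ) :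
    Function.Injective (fun τ : Fin ℓ → ℝ => fun j : Fin ℓ => Jact l c j τ) ∧
    Set.range (fun τ : Fin ℓ → ℝ => fun j : Fin ℓ => Jact l c j τ) =
      {x : Fin ℓ → ℝ | ∀ j : Fin ℓ, 0 < x j ∧ x j < (l j : ℝ) -
        ∑ i ∈ Finset.univ.filter (fun i => i < j), (c j i : ℝ) * x i} ∧
    closure (Set.range (fun τ : Fin ℓ → ℝ => fun j : Fin ℓ => Jact l c j τ)) =
      {x : Fin ℓ → ℝ | ∀ j : Fin ℓ, 0 ≤ x j ∧ x j ≤ (l j : ℝ) -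
        ∑ i ∈ Finset.univ.filter (fun i => i < j), (c j i : ℝ) * x i} := by
  have hrange : Set.range (actionMap l c) = openMomentPolytope l c :=
    (range_actionMap_subset l c hpos).antisymm (openMomentPolytope_subset_range l c)
  refine ⟨actionMap_injective l c hpos, hrange, ?_⟩
  rw [show (fun τ j ↦ Jact l c j τ) = actionMap l c from rfl, hrange]
  exact closure_openMomentPolytope l c (hrange ▸ Set.range_nonempty _)

/-- Theorem 6.1 (the moment polytope): under the positivity condition, the map
`J = (J₁,…,J_ℓ)` is injective, its image is the open 'cubic polytope'
`{x : 0 < x_j < l_j − Σ_{i<j} c_{ji} x_i}`, and the closure of its image is the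
moment polytope `Δ = {x : 0 ≤ x_j ≤ l_j − Σ_{i<j} c_{ji} x_i}`. -/
theorem action_map_range_is_polytope {ℓ : ℕ} (l : Fin ℓ → ℤ)
    (c : Fin ℓ → Fin ℓ → ℤ) (hl : ∀ j, l j ≠ 0)
    (hpos : ∀ τ : Fin ℓ → ℝ, ∀ j : Fin ℓ, 0 < (l j : ℝ) - Lfun l c j τ) :
    Function.Injective (fun τ : Fin ℓ → ℝ => fun j : Fin ℓ => Jact l c j τ) ∧
    Set.range (fun τ : Fin ℓ → ℝ => fun j : Fin ℓ => Jact l c j τ) =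
      {x : Fin ℓ → ℝ | ∀ j : Fin ℓ, 0 < x j ∧ x j < (l j : ℝ) -
        ∑ i ∈ Finset.univ.filter (fun i => i < j), (c j i : ℝ) * x i} ∧
    closure (Set.range (fun τ : Fin ℓ → ℝ => fun j : Fin ℓ => Jact l c j τ)) =
      {x : Fin ℓ → ℝ | ∀ j : Fin ℓ, 0 ≤ x j ∧ x j ≤ (l j : ℝ) -
        ∑ i ∈ Finset.univ.filter (fun i => i < j), (c j i : ℝ) * x i} :=
  action_map_range_is_polytope_general l c hpos
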